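/- Let α and β be types, ι : α → α an involution (ι ∘ ι = id), and f : α → β a map such that for all x, y ∈ α one has f x = f y if and only if y = x or y = ι x. If s and t are multisets over α with s.map f = t.map f, then s + s.map ι = t + t.map ι. -/
import Mathlib


/-- Let `ι : α → α` be an involution and `f : α → β` a map such that `f x = f y` iff
`y = x` or `y = ι x`.  If `s` and `t` are multisets over `α` with `s.map f = t.map f`,
then `s + s.map ι = t + t.map ι`. -/
theorem stmt5 {α β : Type*} (ι : α → α) (hι : Function.Involutive ι)
    (f : α → β) (hf : ∀ x y : α, f x = f y ↔ y = x ∨ y = ι x)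
    (s t : Multiset α) (h : s.map f = t.map f) :
    s + s.map ι = t + t.map ι := by
  classical
  induction s using Multiset.induction generalizing t with
  | empty =>
    simp only [Multiset.map_zero] at h
    have : t = 0 := by
      rwa [eq_comm, Multiset.map_eq_zero] at h
    simp [this]
  | cons a s ih =>
    have hmem : f a ∈ t.map f := by
      rw [← h, Multiset.map_cons]; exact Multiset.mem_cons_self _ _
    obtain ⟨b, hbt, hfb⟩ := Multiset.mem_map.mp hmem
    have ht : t = b ::ₘ t.erase b := (Multiset.cons_erase hbt).symm
    have h' : s.map f = (t.erase b).map f := by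
      have := h
      rw [ht, Multiset.map_cons, Multiset.map_cons, hfb] at this
      exact (Multiset.cons_inj_right _).mp this
    have key := ih (t.erase b) h'
    rcases (hf b a).mp hfb with hba | hba
    · subst hba
      rw [ht, Multiset.map_cons, Multiset.map_cons]
      rw [show (a ::ₘ s) + (ι a ::ₘ s.map ι) = a ::ₘ ι a ::ₘ (s + s.map ι) by
        simp [Multiset.cons_add, Multiset.add_cons]; try rw [Multiset.cons_swap],
        show (a ::ₘ t.erase a) + (ι a ::ₘ (t.erase a).map ι)
          = a ::ₘ ι a ::ₘ (t.erase a + (t.erase a).map ι) by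
        simp [Multiset.cons_add, Multiset.add_cons]; try rw [Multiset.cons_swap], key, Multiset.cons_swap]
    · -- a = ι b, so ι a = b
      have hb : ι a = b := by rw [hba, hι]
      rw [ht, Multiset.map_cons, Multiset.map_cons]
      rw [show (a ::ₘ s) + (ι a ::ₘ s.map ι) = a ::ₘ ι a ::ₘ (s + s.map ι) by
        simp [Multiset.cons_add, Multiset.add_cons]; try rw [Multiset.cons_swap],
        show (b ::ₘ t.erase b) + (ι b ::ₘ (t.erase b).map ι)
          = ι b ::ₘ b ::ₘ (t.erase b + (t.erase b).map ι) by
        simp [Multiset.cons_add, Multiset.add_cons, Multiset.cons_swap], key,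
        ← hba, hb, Multiset.cons_swap]
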